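/- If k > n is not an integral multiple of n, writing k = pn + q with p ≥ 1 and 1 ≤ q ≤ n−1, then R*(k) ≤ R*(n + ⌈q/p⌉). -/

import Mathlib

/-- A closed walk with `k` visits on `n` targets, modeled as a `k`-periodic
sequence of targets in which consecutive visits are distinct and every
target is visited at least once in each period. -/
structure CWalk (n k : ℕ) where
  seq : ℕ → Fin n
  periodic : ∀ i, seq (i + k) = seq i
  step : ∀ i, seq i ≠ seq (i + 1)
  covers : ∀ d : Fin n, ∃ i < k, seq i = d

namespace CWalk

/-- Travel time from the `i`-th to the `j`-th visit. -/
noncomputable def tt {n k : ℕ} (c : Fin n → Fin n → ℝ) (W : CWalk n k) (i j : ℕ) : ℝ :=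
  ∑ t ∈ Finset.Ico i j, c (W.seq t) (W.seq (t + 1))

/-- Duration of one period of the walk. -/
noncomputable def duration {n k : ℕ} (c : Fin n → Fin n → ℝ) (W : CWalk n k) : ℝ :=
  W.tt c 0 k

/-- Revisit time of target `d`: the maximum time between consecutive visits to `d`. -/
noncomputable def RT {n k : ℕ} (c : Fin n → Fin n → ℝ) (W : CWalk n k) (d : Fin n) : ℝ :=
  sSup {T : ℝ | ∃ i j : ℕ, i < j ∧ W.seq i = d ∧ W.seq j = d ∧
    (∀ t, i < t → t < j → W.seq t ≠ d) ∧ T = W.tt c i j}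

/-- Revisit time of the walk: maximum revisit time over all targets. -/
noncomputable def R {n k : ℕ} (c : Fin n → Fin n → ℝ) (W : CWalk n k) : ℝ :=
  sSup {T : ℝ | ∃ d : Fin n, T = W.RT c d}

end CWalk

/-- Optimal revisit time over all closed walks with `k` visits. -/
noncomputable def Rstar (n : ℕ) (c : Fin n → Fin n → ℝ) (k : ℕ) : ℝ :=
  sInf {T : ℝ | ∃ W : CWalk n k, T = W.R c}

/-- Optimal TSP tour length: minimal duration of a closed walk with `n` visits
(each target is then visited exactly once). -/
noncomputable def TSPstar (n : ℕ) (c : Fin n → Fin n → ℝ) : ℝ :=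
  sInf {T : ℝ | ∃ W : CWalk n n, T = W.duration c}

/-
Let `K = n + ⌈q/p⌉`, so that `n < K < 2n`, and let `W` be any walk with `K` visits. By pigeonhole
some target is visited only once per period of `W`, so the duration of `W` is at most `R(W)`. For
`n ≥ 3` some visit of `W` can be shortcut: its two neighbours differ and its target is visited
elsewhere in the period (otherwise the walk would eventually alternate between two targets).
Concatenating `p` copies of `W`, in `s = p⌈q/p⌉ - q < p` of which that visit is shortcut, gives a
walk with `pK - s = k` visits; by the triangle inequality every target recurs in it within one
duration of `W`. For `n = 2` walks have even length, and `k` and `K` are odd.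
-/

namespace CWalk

variable {n k K : ℕ}

theorem period_pos (W : CWalk n k) : 0 < k := by
  obtain ⟨i, hi, -⟩ := W.covers (W.seq 0)
  omega

theorem seq_add_mul (W : CWalk n k) (i t : ℕ) : W.seq (i + t * k) = W.seq i :=
  (Function.Periodic.nat_mul W.periodic t) i

theorem seq_mod (W : CWalk n k) (i : ℕ) : W.seq (i % k) = W.seq i :=
  Function.Periodic.map_mod_nat W.periodic i

def ofSurjective (f : ℕ → Fin n) (hf : Function.Periodic f k) (hk : 0 < k)
    (hstep : ∀ i, f i ≠ f (i + 1)) (hsurj : Function.Surjective f) : CWalk n k where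
  seq := f
  periodic := hf
  step := hstep
  covers d := by
    obtain ⟨i, rfl⟩ := hsurj d
    exact ⟨i % k, Nat.mod_lt i hk, hf.map_mod_nat i⟩

def rotate (W : CWalk n k) (s : ℕ) : CWalk n k :=
  ofSurjective (fun i => W.seq (i + s))
    (fun i => by simp only [Nat.add_right_comm i k s, W.periodic]) W.period_pos
    (fun i => by simpa only [Nat.add_right_comm i 1 s] using W.step (i + s))
    (fun d => by
      obtain ⟨u, -, rfl⟩ := W.covers d
      refine ⟨u + s * k - s, ?_⟩
      have : s ≤ s * k := Nat.le_mul_of_pos_right s W.period_pos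
      simp only [Nat.sub_add_cancel (this.trans (Nat.le_add_left _ u)), W.seq_add_mul])

@[simp]
theorem rotate_seq (W : CWalk n k) (s i : ℕ) : (W.rotate s).seq i = W.seq (i + s) := rfl

theorem even_period_of_two (W : CWalk 2 k) : Even k := by
  have hper : Function.Periodic W.seq 2 := fun i => by
    have h₁ := W.step i
    have h₂ := W.step (i + 1)
    revert h₁ h₂
    generalize W.seq i = a
    generalize W.seq (i + 1) = b
    generalize W.seq (i + 1 + 1) = c
    revert a b c
    decide
  by_contra hk
  obtain ⟨t, rfl⟩ := Nat.not_even_iff_odd.mp hk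
  have h₁ : W.seq (1 + t * 2) = W.seq 1 := hper.nat_mul t 1
  have h₀ : W.seq (0 + (2 * t + 1)) = W.seq 0 := W.periodic 0
  exact W.step 0 (by rw [← h₀, ← h₁]; ring_nf)

theorem isEmpty_two_of_odd (hk : Odd k) : IsEmpty (CWalk 2 k) :=
  ⟨fun W => (Nat.not_even_iff_odd.mpr hk) W.even_period_of_two⟩

theorem nonempty_of_three_le (hn : 3 ≤ n) (hK : n ≤ K) : Nonempty (CWalk n K) := by
  let g : ℕ → ℕ := fun j => if j < n then j else 1 + (j - n) % 2
  have hg : ∀ j, g j < n := fun j => by simp only [g]; split_ifs <;> omega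
  have hstep : ∀ i, g (i % K) ≠ g ((i + 1) % K) := fun i => by
    have hi := Nat.mod_lt i (by omega : 0 < K)
    have hnext : (i + 1) % K = (i % K + 1) % K := by
      rw [Nat.add_mod, Nat.mod_eq_of_lt (by omega : 1 < K)]
    rcases Nat.lt_or_ge (i % K + 1) K with h | h
    · rw [Nat.mod_eq_of_lt h] at hnext
      simp only [g]
      split_ifs <;> omega
    · rw [show i % K + 1 = K by omega, Nat.mod_self] at hnext
      simp only [g]
      split_ifs <;> omega
  refine ⟨ofSurjective (fun i => ⟨g (i % K), hg _⟩) (fun i => by simp only [Nat.add_mod_right])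
    (by omega) (fun i h => hstep i (congrArg Fin.val h)) fun d => ⟨d, ?_⟩⟩
  simp [g, Nat.mod_eq_of_lt (d.isLt.trans_le hK)]

theorem exists_lt_seq_eq (W : CWalk n k) (hk : n < k) :
    ∃ a b, a < b ∧ b < k ∧ W.seq a = W.seq b := by
  obtain ⟨x, y, hxy, h⟩ := Fintype.exists_ne_map_eq_of_card_lt (fun i : Fin k => W.seq i)
    (by simpa using hk)
  rcases lt_or_gt_of_ne (Fin.val_ne_of_ne hxy) with hlt | hlt
  · exact ⟨x, y, hlt, y.isLt, h⟩
  · exact ⟨y, x, hlt, x.isLt, h.symm⟩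

theorem exists_forall_seq_eq_mod_eq (W : CWalk n k) (hk : k < 2 * n) :
    ∃ i, ∀ j, W.seq j = W.seq i → j % k = i % k := by
  classical
  obtain ⟨d, hd⟩ := Fintype.exists_card_fiber_lt_of_card_lt_mul (fun i : Fin k => W.seq i)
    (n := 2) (by simpa [mul_comm] using hk)
  obtain ⟨i, hik, rfl⟩ := W.covers d
  refine ⟨i, fun j hj => ?_⟩
  have := Finset.card_le_one.mp (Nat.lt_succ_iff.mp hd) ⟨j % k, Nat.mod_lt j W.period_pos⟩
    (Finset.mem_filter.mpr ⟨Finset.mem_univ _, by rw [W.seq_mod, hj]⟩) ⟨i, hik⟩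
    (Finset.mem_filter.mpr ⟨Finset.mem_univ _, rfl⟩)
  rw [Nat.mod_eq_of_lt hik]
  exact congrArg Fin.val this

theorem card_le_two_of_seq_add_two (W : CWalk n k) {t : ℕ}
    (h : ∀ i, W.seq (t + i + 2) = W.seq (t + i)) : n ≤ 2 := by
  classical
  have htwo : ∀ i, W.seq (t + i) ∈ ({W.seq t, W.seq (t + 1)} : Finset (Fin n)) ∧
      W.seq (t + i + 1) ∈ ({W.seq t, W.seq (t + 1)} : Finset (Fin n)) := fun i => by
    induction i with
    | zero => simp
    | succ i ih => exact ⟨ih.2, by rw [← Nat.add_assoc, h]; exact ih.1⟩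
  have huniv : (Finset.univ : Finset (Fin n)) ⊆ {W.seq t, W.seq (t + 1)} := fun d _ => by
    obtain ⟨u, -, rfl⟩ := W.covers d
    rw [← W.seq_add_mul u t, show u + t * k = t + (u + t * k - t) by
      have := Nat.le_mul_of_pos_right t W.period_pos; omega]
    exact (htwo _).1
  simpa using (Finset.card_le_card huniv).trans Finset.card_le_two

theorem exists_shortcut (W : CWalk n k) (hn : 3 ≤ n) (hk : n < k) :
    ∃ s, W.seq s ≠ W.seq (s + 2) ∧ ∃ j, 2 ≤ j ∧ j ≤ k ∧ W.seq (s + j) = W.seq (s + 1) := by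
  by_contra H
  have hforce : ∀ s, (∃ j, 2 ≤ j ∧ j ≤ k ∧ W.seq (s + j) = W.seq (s + 1)) →
      W.seq s = W.seq (s + 2) := fun s hj => by_contra fun hne => H ⟨s, hne, hj⟩
  obtain ⟨a, b, hab, hbk, hseq⟩ := W.exists_lt_seq_eq hk
  obtain ⟨t, ht⟩ : ∃ t, t + 1 = a + k := ⟨a + k - 1, by omega⟩
  -- A repeated visit forces its two neighbours to coincide, so the next visit is repeated too.
  have hrep : ∀ i, ∃ j, 2 ≤ j ∧ j ≤ k ∧ W.seq (t + i + j) = W.seq (t + i + 1) := by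
    intro i
    induction i with
    | zero =>
      refine ⟨b - a + 1, by omega, by omega, ?_⟩
      rw [show t + 0 + (b - a + 1) = b + k by omega, show t + 0 + 1 = a + k by omega,
        W.periodic, W.periodic, hseq]
    | succ i ih =>
      refine ⟨k - 1, by omega, by omega, ?_⟩
      rw [show t + (i + 1) + (k - 1) = t + i + k by omega, W.periodic, hforce _ ih,
        show t + (i + 1) + 1 = t + i + 2 by omega]
  have := W.card_le_two_of_seq_add_two fun i => (hforce _ (hrep i)).symm
  omega

section

variable {c : Fin n → Fin n → ℝ} (W : CWalk n k)

theorem tt_nonneg (hc : ∀ u v : Fin n, u ≠ v → 0 < c u v) (i j : ℕ) : 0 ≤ W.tt c i j :=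
  Finset.sum_nonneg fun t _ => (hc _ _ (W.step t)).le

theorem tt_add {i j l : ℕ} (hij : i ≤ j) (hjl : j ≤ l) :
    W.tt c i j + W.tt c j l = W.tt c i l :=
  Finset.sum_Ico_consecutive _ hij hjl

theorem tt_succ {i j : ℕ} (hij : i ≤ j) :
    W.tt c i (j + 1) = W.tt c i j + c (W.seq j) (W.seq (j + 1)) :=
  Finset.sum_Ico_succ_top hij _

theorem tt_self_succ (i : ℕ) : W.tt c i (i + 1) = c (W.seq i) (W.seq (i + 1)) := by
  simp [tt]

theorem tt_le_tt (hc : ∀ u v : Fin n, u ≠ v → 0 < c u v) {i j l : ℕ} (hij : i ≤ j)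
    (hjl : j ≤ l) : W.tt c i j ≤ W.tt c i l := by
  rw [← W.tt_add hij hjl]
  linarith [W.tt_nonneg hc j l]

theorem tt_add_period (i : ℕ) : W.tt c i (i + k) = W.duration c := by
  induction i with
  | zero => rw [zero_add]; rfl
  | succ i ih =>
    have h₁ := W.tt_add (c := c) (Nat.le_add_right i 1) (Nat.le_add_right (i + 1) k)
    have h₂ := W.tt_add (c := c) (Nat.le_add_right i k) (Nat.le_add_right (i + k) 1)
    have hwrap : W.tt c (i + k) (i + k + 1) = W.tt c i (i + 1) := by
      rw [tt_self_succ, tt_self_succ, W.periodic, Nat.add_right_comm, W.periodic]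
    rw [Nat.add_right_comm i 1 k] at h₁ ⊢
    linarith

theorem le_tt (htri : ∀ u v w : Fin n, c u w ≤ c u v + c v w) {i j : ℕ} (hij : i < j) :
    c (W.seq i) (W.seq j) ≤ W.tt c i j := by
  induction j, hij using Nat.le_induction with
  | base => rw [tt_self_succ]
  | succ j hij ih =>
    rw [W.tt_succ (by omega)]
    linarith [htri (W.seq i) (W.seq j) (W.seq (j + 1))]

theorem duration_rotate (s : ℕ) : (W.rotate s).duration c = W.duration c :=
  calc (W.rotate s).duration c
        = ∑ t ∈ Finset.Ico 0 k, c (W.seq (t + s)) (W.seq (t + s + 1)) := by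
        simp only [duration, tt, rotate_seq, Nat.add_right_comm _ 1 s]
    _ = W.tt c s (s + k) := by
        rw [Finset.sum_Ico_add' (fun x => c (W.seq x) (W.seq (x + 1))), zero_add, Nat.add_comm k s]
        rfl
    _ = W.duration c := W.tt_add_period s

theorem R_nonneg (hc : ∀ u v : Fin n, u ≠ v → 0 < c u v) : 0 ≤ W.R c := by
  refine Real.sSup_nonneg ?_
  rintro T ⟨d, rfl⟩
  refine Real.sSup_nonneg ?_
  rintro T ⟨i, j, -, -, -, -, rfl⟩
  exact W.tt_nonneg hc i j

theorem R_le_of_forall_exists_return (hc : ∀ u v : Fin n, u ≠ v → 0 < c u v) {D : ℝ}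
    (h : ∀ i, ∃ j, i < j ∧ W.seq j = W.seq i ∧ W.tt c i j ≤ D) : W.R c ≤ D := by
  have hD : 0 ≤ D := by
    obtain ⟨j, -, -, hj⟩ := h 0
    exact (W.tt_nonneg hc 0 j).trans hj
  refine Real.sSup_le ?_ hD
  rintro T ⟨d, rfl⟩
  refine Real.sSup_le ?_ hD
  rintro T ⟨i, j, hij, hi, -, hbetween, rfl⟩
  obtain ⟨j', hij', hj', hD'⟩ := h i
  have hjj' : j ≤ j' := by
    by_contra! hlt
    exact hbetween j' hij' hlt (hj'.trans hi)
  exact (W.tt_le_tt hc hij.le hjj').trans hD'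

/-- A target visited only once per period waits a whole period between visits. -/
theorem duration_le_R (hc : ∀ u v : Fin n, u ≠ v → 0 < c u v)
    (h : ∃ i, ∀ j, W.seq j = W.seq i → j % k = i % k) :
    W.duration c ≤ W.R c := by
  obtain ⟨i, hi⟩ := h
  have hgap : ∀ t, i < t → t < i + k → W.seq t ≠ W.seq i := fun t h₁ h₂ ht => by
    have := Nat.sub_mod_eq_zero_of_mod_eq (hi t ht)
    rw [Nat.mod_eq_of_lt (by omega)] at this
    omega
  have hbdd : BddAbove {T : ℝ | ∃ a b : ℕ, a < b ∧ W.seq a = W.seq i ∧ W.seq b = W.seq i ∧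
      (∀ t, a < t → t < b → W.seq t ≠ W.seq i) ∧ T = W.tt c a b} := by
    refine ⟨W.duration c, ?_⟩
    rintro T ⟨a, b, hab, ha, -, hbetween, rfl⟩
    have hb : b ≤ a + k := by
      by_contra! hlt
      exact hbetween (a + k) (by have := W.period_pos; omega) hlt (by rw [W.periodic, ha])
    rw [← W.tt_add_period a]
    exact W.tt_le_tt hc hab.le hb
  have hRT : W.duration c ≤ W.RT c (W.seq i) := by
    refine le_csSup hbdd ⟨i, i + k, ?_, rfl, W.periodic i, hgap, (W.tt_add_period i).symm⟩
    have := W.period_pos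
    omega
  refine hRT.trans (le_csSup ((Set.finite_range (W.RT c)).bddAbove.mono ?_) ⟨W.seq i, rfl⟩)
  rintro T ⟨d, rfl⟩
  exact ⟨d, rfl⟩

end

section Subwalk

variable {c : Fin n → Fin n → ℝ} {Z : CWalk n k} {V : CWalk n K} {φ : ℕ → ℕ}

theorem tt_le_tt_of_seq_eq_comp (htri : ∀ u v w : Fin n, c u w ≤ c u v + c v w)
    (hφ : StrictMono φ) (hZ : ∀ i, Z.seq i = V.seq (φ i)) {i j : ℕ} (hij : i ≤ j) :
    Z.tt c i j ≤ V.tt c (φ i) (φ j) := by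
  induction j, hij using Nat.le_induction with
  | base => simp [tt]
  | succ j hij ih =>
    have hstep : c (Z.seq j) (Z.seq (j + 1)) ≤ V.tt c (φ j) (φ (j + 1)) := by
      rw [hZ, hZ]
      exact V.le_tt htri (hφ (Nat.lt_succ_self j))
    rw [Z.tt_succ hij, ← V.tt_add (hφ.monotone hij) (hφ.monotone (Nat.le_succ j))]
    linarith

theorem R_le_duration_of_seq_eq_comp (hc : ∀ u v : Fin n, u ≠ v → 0 < c u v)
    (htri : ∀ u v w : Fin n, c u w ≤ c u v + c v w)
    (hφ : StrictMono φ) (hZ : ∀ i, Z.seq i = V.seq (φ i))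
    (hret : ∀ i, ∃ j, φ i < φ j ∧ φ j ≤ φ i + K ∧ V.seq (φ j) = V.seq (φ i)) :
    Z.R c ≤ V.duration c := by
  refine Z.R_le_of_forall_exists_return hc fun i => ?_
  obtain ⟨j, hij, hjK, hj⟩ := hret i
  refine ⟨j, hφ.lt_iff_lt.mp hij, by rw [hZ, hZ, hj], ?_⟩
  calc Z.tt c i j ≤ V.tt c (φ i) (φ j) :=
        tt_le_tt_of_seq_eq_comp htri hφ hZ (hφ.lt_iff_lt.mp hij).le
    _ ≤ V.tt c (φ i) (φ i + K) := V.tt_le_tt hc hij.le hjK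
    _ = V.duration c := V.tt_add_period _

end Subwalk

end CWalk

/-- In every block of `p` periods of length `K`, visit `1` of each of the first `s` periods is
skipped; `Kept K p s u` says that position `u` survives. -/
def skippedPos (K s : ℕ) : Finset ℕ :=
  (Finset.range s).image fun b => b * K + 1

def Kept (K p s u : ℕ) : Prop :=
  u % (p * K) ∉ skippedPos K s

instance (K p s : ℕ) : DecidablePred (Kept K p s) :=
  fun _ => inferInstanceAs (Decidable (¬ _))

namespace Kept

variable {K p s : ℕ}

theorem of_mod_ne_one (hK : 2 ≤ K) {u : ℕ} (h : u % K ≠ 1) : Kept K p s u := by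
  intro hu
  obtain ⟨b, -, hb⟩ := Finset.mem_image.mp hu
  apply h
  rw [← Nat.mod_mul_left_mod u p K, ← hb, Nat.add_comm, Nat.add_mul_mod_self_right,
    Nat.mod_eq_of_lt hK]

theorem add_mul_iff (u : ℕ) : Kept K p s (u + p * K) ↔ Kept K p s u := by
  rw [Kept, Kept, Nat.add_mod_right]

theorem infinite (hK : 2 ≤ K) : (Set.ofPred (Kept K p s)).Infinite :=
  Set.infinite_of_forall_exists_gt fun a =>
    ⟨K * (a + 1), of_mod_ne_one hK (by rw [Nat.mul_mod_right]; omega), by nlinarith⟩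

theorem count_period_add (hK : 2 ≤ K) (hs : s ≤ p) :
    Nat.count (Kept K p s) (p * K) + s = p * K := by
  have hsub : skippedPos K s ⊆ Finset.range (p * K) := fun u hu => by
    obtain ⟨b, hb, rfl⟩ := Finset.mem_image.mp hu
    have : (b + 1) * K ≤ p * K := Nat.mul_le_mul_right K (by simp at hb; omega)
    simp only [Finset.mem_range]
    nlinarith
  have hfilter : ({u ∈ Finset.range (p * K) | Kept K p s u} : Finset ℕ) =
      Finset.range (p * K) \ skippedPos K s := by
    ext u
    rw [Finset.mem_filter, Finset.mem_sdiff, Finset.mem_range]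
    refine and_congr_right fun hu => ?_
    rw [Kept, Nat.mod_eq_of_lt hu]
  have hcard : (skippedPos K s).card = s := by
    rw [skippedPos, Finset.card_image_of_injective _ fun a b hab => by
      simpa [Nat.mul_left_inj (by omega : K ≠ 0)] using hab, Finset.card_range]
  have := Finset.card_sdiff_add_card_eq_card hsub
  rwa [hcard, Finset.card_range, ← hfilter, ← Nat.count_eq_card_filter_range] at this

theorem nth_succ (hK : 3 ≤ K) (i : ℕ) :
    Nat.nth (Kept K p s) (i + 1) = Nat.nth (Kept K p s) i + 1 ∨
      ¬ Kept K p s (Nat.nth (Kept K p s) i + 1) ∧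
        Nat.nth (Kept K p s) (i + 1) = Nat.nth (Kept K p s) i + 2 := by
  set x := Nat.nth (Kept K p s) i
  have hinf := infinite (p := p) (s := s) (by omega : 2 ≤ K)
  have hcount : Nat.count (Kept K p s) (x + 1) = i + 1 := by
    rw [Nat.count_succ, Nat.count_nth_of_infinite hinf, if_pos (Nat.nth_mem_of_infinite hinf i)]
  by_cases h₁ : Kept K p s (x + 1)
  · left
    rw [← hcount, Nat.nth_count h₁]
  · right
    refine ⟨h₁, ?_⟩
    have hmod : (x + 1) % K = 1 := by_contra fun h => h₁ (of_mod_ne_one (by omega) h)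
    have h₂ : Kept K p s (x + 2) := of_mod_ne_one (by omega) <| by
      rw [show x + 2 = x + 1 + 1 by rfl, Nat.add_mod, hmod, Nat.mod_eq_of_lt (by omega : 1 < K),
        Nat.mod_eq_of_lt (by omega : 2 < K)]
      omega
    rw [← Nat.nth_count h₂, show x + 2 = x + 1 + 1 by rfl, Nat.count_succ, if_neg h₁, hcount]

theorem nth_add (hK : 2 ≤ K) (hs : s ≤ p) {k : ℕ} (hk : k + s = p * K) (i : ℕ) :
    Nat.nth (Kept K p s) (i + k) = Nat.nth (Kept K p s) i + p * K := by
  set x := Nat.nth (Kept K p s) i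
  have hinf := infinite (p := p) (s := s) hK
  have hx : Kept K p s (x + p * K) := (add_mul_iff x).mpr (Nat.nth_mem_of_infinite hinf i)
  have hcount : Nat.count (Kept K p s) (x + p * K) = i + k := by
    rw [Nat.count_add']
    simp only [add_mul_iff]
    rw [Nat.count_nth_of_infinite hinf]
    have := count_period_add hK hs
    omega
  rw [← hcount, Nat.nth_count hx]

end Kept

namespace CWalk

variable {n k K : ℕ} {c : Fin n → Fin n → ℝ}

theorem exists_kept_seq_eq (V : CWalk n K) {p s : ℕ} (hK : 3 ≤ K)
    (h₁ : ∃ j, 2 ≤ j ∧ j ≤ K ∧ V.seq j = V.seq 1) (x : ℕ) :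
    ∃ w, x < w ∧ w ≤ x + K ∧ Kept K p s w ∧ V.seq w = V.seq x := by
  by_cases hx : x % K = 1
  · obtain ⟨j, hj2, hjK, hj⟩ := h₁
    have hdiv := Nat.mod_add_div' x K
    refine ⟨j + x / K * K, by omega, by omega, Kept.of_mod_ne_one (by omega) ?_, ?_⟩
    · rw [Nat.add_mul_mod_self_right]
      rcases hjK.lt_or_eq with h | rfl
      · rw [Nat.mod_eq_of_lt h]
        omega
      · rw [Nat.mod_self]
        omega
    · conv_rhs => rw [← hdiv, hx]
      rw [V.seq_add_mul, V.seq_add_mul, hj]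
  · exact ⟨x + K, by omega, le_rfl, Kept.of_mod_ne_one (by omega) (by rwa [Nat.add_mod_right]),
      V.periodic x⟩

theorem seq_nth_kept_ne_succ (V : CWalk n K) {p s : ℕ} (hK : 3 ≤ K)
    (h₀₂ : V.seq 0 ≠ V.seq 2) (i : ℕ) :
    V.seq (Nat.nth (Kept K p s) i) ≠ V.seq (Nat.nth (Kept K p s) (i + 1)) := by
  rcases Kept.nth_succ hK i with h | ⟨hskip, h⟩
  · rw [h]
    exact V.step _
  · rw [h]
    generalize Nat.nth (Kept K p s) i = x at hskip ⊢
    -- the skipped position `x + 1` is visit `1` of a period, so `x` is its visit `0`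
    have hmod : (x + 1) % K = 1 := by_contra fun h => hskip (Kept.of_mod_ne_one (by omega) h)
    obtain ⟨t, rfl⟩ : ∃ t, x = 0 + t * K :=
      ⟨(x + 1) / K, by have := Nat.mod_add_div' (x + 1) K; omega⟩
    rw [show 0 + t * K + 2 = 2 + t * K by omega, V.seq_add_mul, V.seq_add_mul]
    exact h₀₂

/-- `Z` runs through the kept positions of `V`; by the triangle inequality each leg of `Z` is no
longer than the corresponding stretch of `V`. -/
theorem exists_R_le_duration_of_shortcut (hc : ∀ u v : Fin n, u ≠ v → 0 < c u v)
    (htri : ∀ u v w : Fin n, c u w ≤ c u v + c v w) (V : CWalk n K) (hK : 3 ≤ K)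
    (h₀₂ : V.seq 0 ≠ V.seq 2) (h₁ : ∃ j, 2 ≤ j ∧ j ≤ K ∧ V.seq j = V.seq 1)
    {p s : ℕ} (hp : 0 < p) (hs : s ≤ p) (hk : k + s = p * K) :
    ∃ Z : CWalk n k, Z.R c ≤ V.duration c := by
  set φ := Nat.nth (Kept K p s)
  have hinf := Kept.infinite (p := p) (s := s) (by omega : 2 ≤ K)
  have hφ : StrictMono φ := Nat.nth_strictMono hinf
  have hrange : ∀ w, Kept K p s w → ∃ j, φ j = w := fun w hw => by
    rw [← Set.mem_range, Nat.range_nth_of_infinite hinf]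
    exact hw
  let Z : CWalk n k := ofSurjective (fun i => V.seq (φ i))
    (fun i => by simp only [φ, Kept.nth_add (by omega) hs hk, V.seq_add_mul]) (by nlinarith)
    (V.seq_nth_kept_ne_succ hK h₀₂)
    (fun d => by
      obtain ⟨u, -, rfl⟩ := V.covers d
      obtain ⟨w, -, -, hw, hwu⟩ := V.exists_kept_seq_eq (p := p) (s := s) hK h₁ u
      obtain ⟨j, rfl⟩ := hrange w hw
      exact ⟨j, hwu⟩)
  refine ⟨Z, R_le_duration_of_seq_eq_comp hc htri hφ (fun i => rfl) fun i => ?_⟩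
  obtain ⟨w, hxw, hwK, hw, hwx⟩ := V.exists_kept_seq_eq (p := p) (s := s) hK h₁ (φ i)
  obtain ⟨j, rfl⟩ := hrange w hw
  exact ⟨j, hxw, hwK, hwx⟩

end CWalk

theorem Rstar_eq_zero_of_isEmpty {n k : ℕ} (c : Fin n → Fin n → ℝ) [IsEmpty (CWalk n k)] :
    Rstar n c k = 0 := by
  simp [Rstar]

theorem Rstar_le_Rstar_of_forall {n k K : ℕ} {c : Fin n → Fin n → ℝ}
    (hc : ∀ u v : Fin n, u ≠ v → 0 < c u v) [Nonempty (CWalk n K)]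
    (h : ∀ W : CWalk n K, ∃ Z : CWalk n k, Z.R c ≤ W.R c) : Rstar n c k ≤ Rstar n c K := by
  have hbdd : BddBelow {T : ℝ | ∃ Z : CWalk n k, T = Z.R c} := ⟨0, by
    rintro _ ⟨Z, rfl⟩
    exact Z.R_nonneg hc⟩
  refine le_csInf ⟨_, Classical.arbitrary _, rfl⟩ ?_
  rintro _ ⟨W, rfl⟩
  obtain ⟨Z, hZ⟩ := h W
  exact (csInf_le hbdd ⟨Z, rfl⟩).trans hZ

theorem Rstar_upper_bound_general
    (n p q k : ℕ) (hp : 1 ≤ p) (hq1 : 1 ≤ q) (hq2 : q ≤ n - 1)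
    (hk : k = p * n + q)
    (c : Fin n → Fin n → ℝ)
    (hc : ∀ u v : Fin n, u ≠ v → 0 < c u v)
    (htri : ∀ u v w : Fin n, c u w ≤ c u v + c v w) :
    Rstar n c k ≤ Rstar n c (n + (q + p - 1) / p) := by
  set m := (q + p - 1) / p
  have hm : q ≤ p * m ∧ p * m < q + p := by
    have h₁ : p * m + (q + p - 1) % p = q + p - 1 := Nat.div_add_mod _ _
    have h₂ := Nat.mod_lt (q + p - 1) hp
    omega
  have hm₁ : 1 ≤ m := Nat.pos_of_ne_zero fun h => by simp [h] at hm; omega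
  have hmq : m ≤ q := by nlinarith
  obtain rfl | hn : n = 2 ∨ 3 ≤ n := by omega
  · -- no walk on two targets has odd length, so both sides are `sInf ∅ = 0`
    have := CWalk.isEmpty_two_of_odd (k := k) (Nat.odd_iff.mpr (by omega))
    have := CWalk.isEmpty_two_of_odd (k := 2 + m) (Nat.odd_iff.mpr (by omega))
    rw [Rstar_eq_zero_of_isEmpty, Rstar_eq_zero_of_isEmpty]
  have := CWalk.nonempty_of_three_le hn (K := n + m) (by omega)
  refine Rstar_le_Rstar_of_forall hc fun W => ?_
  obtain ⟨s, h₀₂, h₁⟩ := W.exists_shortcut hn (by omega)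
  obtain ⟨Z, hZ⟩ := (W.rotate s).exists_R_le_duration_of_shortcut (k := k) (s := p * m - q)
    hc htri (by omega) (by simpa [Nat.add_comm] using h₀₂) (by simpa [Nat.add_comm] using h₁)
    hp (by omega) (by rw [hk, Nat.mul_add]; omega)
  refine ⟨Z, hZ.trans ?_⟩
  rw [W.duration_rotate]
  exact W.duration_le_R hc (W.exists_forall_seq_eq_mod_eq (by omega))

/-- if `k = p n + q` with `p ≥ 1` and `1 ≤ q ≤ n - 1`, then
`R*(k) ≤ R*(n + ⌈q/p⌉)`, where `⌈q/p⌉ = (q + p - 1) / p` in natural division. -/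
theorem Rstar_upper_bound
    (n p q k : ℕ) (hn : 2 ≤ n) (hp : 1 ≤ p) (hq1 : 1 ≤ q) (hq2 : q ≤ n - 1)
    (hk : k = p * n + q)
    (c : Fin n → Fin n → ℝ)
    (hc : ∀ u v : Fin n, u ≠ v → 0 < c u v)
    (htri : ∀ u v w : Fin n, c u w ≤ c u v + c v w) :
    Rstar n c k ≤ Rstar n c (n + (q + p - 1) / p) :=
  Rstar_upper_bound_general n p q k hp hq1 hq2 hk c hc htri
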